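/- Let n ≥ 1 and let D ⊆ ℂⁿ be a bounded open set. Let u₁, u₂ : closure(D) → ℝ be continuous functions that are C² on D, such that for i = 1, 2: Q(u_i)_z(v) ≥ 0 for all z ∈ D and v ∈ ℂⁿ, and for every z ∈ D there exists v ≠ 0 with Q(u_i)_z(v) = 0 (i.e. each u_i is a C² plurisubharmonic solution of the homogeneous complex Monge–Ampère equation on D). If u₁ = u₂ on ∂D, then u₁ = u₂ on D. (Uniqueness of the pluricomplex Green function, given its maximality.) -/

import Mathlib

open Filter Topology

/-- The Levi quadratic form for the standard complex structure of ℂⁿ: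
`Q(u)_z(v) := D²u_z(v,v) + D²u_z(iv,iv)`. -/
noncomputable def leviQ {n : ℕ} (u : EuclideanSpace ℂ (Fin n) → ℝ)
    (z v : EuclideanSpace ℂ (Fin n)) : ℝ :=
  fderiv ℝ (fderiv ℝ u) z v v
    + fderiv ℝ (fderiv ℝ u) z (Complex.I • v) (Complex.I • v)

/-- 1D second derivative test, contradiction form. -/
lemma oneDim_aux {g : ℝ → ℝ} (hdiff : ∀ᶠ t in 𝓝 (0:ℝ), DifferentiableAt ℝ g t)
    (hmax : IsLocalMax g 0) (hpos : 0 < deriv (deriv g) 0) : False := by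
  have hd1 : deriv g 0 = 0 := hmax.deriv_eq_zero
  have hdiff2 : DifferentiableAt ℝ (deriv g) 0 := by
    by_contra h
    rw [deriv_zero_of_not_differentiableAt h] at hpos
    exact lt_irrefl 0 hpos
  have hslope : Filter.Tendsto (slope (deriv g) 0) (𝓝[≠] (0:ℝ))
      (𝓝 (deriv (deriv g) 0)) := hasDerivAt_iff_tendsto_slope.1 hdiff2.hasDerivAt
  have h1 : ∀ᶠ t in 𝓝[>] (0:ℝ), 0 < deriv g t := by
    have hev : ∀ᶠ t in 𝓝[≠] (0:ℝ), 0 < slope (deriv g) 0 t :=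
      hslope.eventually (eventually_gt_nhds hpos)
    have hev' : ∀ᶠ t in 𝓝[>] (0:ℝ), 0 < slope (deriv g) 0 t :=
      nhdsWithin_mono 0 (fun t (ht : 0 < t) => ne_of_gt ht) hev
    filter_upwards [hev', self_mem_nhdsWithin] with t hslt (htpos : 0 < t)
    have : slope (deriv g) 0 t = deriv g t / t := by
      simp [slope, hd1]; ring
    rw [this] at hslt
    have := mul_pos hslt htpos
    rwa [div_mul_cancel₀ _ (ne_of_gt htpos)] at this
  obtain ⟨s, hs_open, hs0, hs_sub⟩ := mem_nhdsWithin.1 h1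
  obtain ⟨ε₁, hε₁, hball₁⟩ := Metric.isOpen_iff.1 hs_open 0 hs0
  obtain ⟨ε₂, hε₂, hball₂⟩ := Metric.mem_nhds_iff.1 (hmax.and hdiff)
  set b : ℝ := min ε₁ ε₂ / 2 with hb
  have hbpos : 0 < b := by positivity
  have hmemb : ∀ t ∈ Set.Icc (0:ℝ) b, g t ≤ g 0 ∧ DifferentiableAt ℝ g t := by
    intro t ht
    apply hball₂
    have h2 : |t| < ε₂ := by
      rw [abs_of_nonneg ht.1]
      calc t ≤ b := ht.2
        _ ≤ ε₂ / 2 := by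
          have := min_le_right ε₁ ε₂; linarith
        _ < ε₂ := by linarith
    simpa [Real.dist_eq] using h2
  have hderivpos : ∀ t ∈ Set.Ioo (0:ℝ) b, 0 < deriv g t := by
    intro t ht
    apply hs_sub
    constructor
    · apply hball₁
      have h2 : |t| < ε₁ := by
        rw [abs_of_nonneg ht.1.le]
        calc t < b := ht.2
          _ ≤ ε₁ / 2 := by
            have := min_le_left ε₁ ε₂; linarith
          _ < ε₁ := by linarith
      simpa [Real.dist_eq] using h2
    · exact ht.1
  have hmono : StrictMonoOn g (Set.Icc 0 b) := by
    apply strictMonoOn_of_deriv_pos (convex_Icc 0 b)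
    · intro t ht
      exact (hmemb t ht).2.continuousAt.continuousWithinAt
    · intro t ht
      rw [interior_Icc] at ht
      exact hderivpos t ht
  have hlt : g 0 < g b :=
    hmono (Set.left_mem_Icc.2 hbpos.le) (Set.right_mem_Icc.2 hbpos.le) hbpos
  exact absurd (hmemb b (Set.right_mem_Icc.2 hbpos.le)).1 (not_le.2 hlt)

/-- Second derivative test along a direction at an interior local max. -/
lemma secondDerivTest {E : Type*} [NormedAddCommGroup E] [NormedSpace ℝ E]
    {φ : E → ℝ} {s : Set E} (hs : IsOpen s) {x : E} (hx : x ∈ s)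
    (hφ : ContDiffOn ℝ 2 φ s) (hmax : IsLocalMax φ x) (v : E) :
    fderiv ℝ (fderiv ℝ φ) x v v ≤ 0 := by
  by_contra hlt
  push_neg at hlt
  set L : ℝ → E := fun t => x + t • v with hLdef
  have hL0 : L 0 = x := by simp [hLdef]
  have hLc : Continuous L := by fun_prop
  have hLd : ∀ t : ℝ, HasDerivAt L v t := by
    intro t
    have h := ((hasDerivAt_id t).smul_const v).const_add x
    rw [one_smul] at h
    exact h
  have hLt : Filter.Tendsto L (𝓝 0) (𝓝 x) := by
    rw [← hL0]
    exact hLc.continuousAt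
  have hmem : ∀ᶠ t in 𝓝 (0:ℝ), L t ∈ s := hLt.eventually (hs.eventually_mem hx)
  have hdiffφ : ∀ y ∈ s, DifferentiableAt ℝ φ y := fun y hy =>
    (hφ.contDiffAt (hs.mem_nhds hy)).differentiableAt two_ne_zero
  set g : ℝ → ℝ := φ ∘ L with hgdef
  have hgd : ∀ᶠ t in 𝓝 (0:ℝ), HasDerivAt g (fderiv ℝ φ (L t) v) t := by
    filter_upwards [hmem] with t ht
    exact (hdiffφ (L t) ht).hasFDerivAt.comp_hasDerivAt t (hLd t)
  have hgd' : deriv g =ᶠ[𝓝 (0:ℝ)] fun t => fderiv ℝ φ (L t) v := by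
    filter_upwards [hgd] with t ht using ht.deriv
  have hf2 : DifferentiableAt ℝ (fderiv ℝ φ) x :=
    ((hφ.contDiffAt (hs.mem_nhds hx)).fderiv_right
      (by norm_num : (1:WithTop ℕ∞) + 1 ≤ 2)).differentiableAt one_ne_zero
  set A := fderiv ℝ (fderiv ℝ φ) x with hAdef
  have hAd : HasDerivAt (fun t => fderiv ℝ φ (L t) v) (A v v) 0 := by
    have h1 : HasDerivAt (fun t => fderiv ℝ φ (L t)) (A v) 0 := by
      have h0 : HasFDerivAt (fderiv ℝ φ) A (L 0) := by
        rw [hL0]; exact hf2.hasFDerivAt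
      exact h0.comp_hasDerivAt 0 (hLd 0)
    exact (ContinuousLinearMap.apply ℝ ℝ v).hasFDerivAt.comp_hasDerivAt 0 h1
  have h2 : deriv (deriv g) 0 = A v v := by
    rw [hgd'.deriv_eq]
    exact hAd.deriv
  have hgm : IsLocalMax g 0 := by
    filter_upwards [hLt.eventually hmax] with t ht
    simpa [hgdef, hL0] using ht
  exact oneDim_aux (hgd.mono fun t ht => ht.differentiableAt) hgm (h2 ▸ hlt)

/-- The doubled real inner product as a continuous bilinear map. -/
noncomputable def Tmap (n : ℕ) :
    EuclideanSpace ℂ (Fin n) →L[ℝ] EuclideanSpace ℂ (Fin n) →L[ℝ] ℝ :=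
  (2:ℝ) • (innerSL ℝ : EuclideanSpace ℂ (Fin n) →L[ℝ] EuclideanSpace ℂ (Fin n) →L[ℝ] ℝ)

lemma Tmap_apply {n : ℕ} (v w : EuclideanSpace ℂ (Fin n)) :
    Tmap n v w = 2 * inner ℝ v w := by
  rw [Tmap, ContinuousLinearMap.smul_apply, ContinuousLinearMap.smul_apply,
    innerSL_apply_apply, smul_eq_mul]

set_option maxHeartbeats 1000000

/-- One-sided comparison principle. -/
lemma cmp_aux {n : ℕ} (D : Set (EuclideanSpace ℂ (Fin n))) (hD : IsOpen D)
    (hbd : Bornology.IsBounded D)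
    (u₁ u₂ : EuclideanSpace ℂ (Fin n) → ℝ)
    (hc₁ : ContinuousOn u₁ (closure D)) (hc₂ : ContinuousOn u₂ (closure D))
    (hu₁ : ContDiffOn ℝ 2 u₁ D) (hu₂ : ContDiffOn ℝ 2 u₂ D)
    (hpsh₂ : ∀ z ∈ D, ∀ v, 0 ≤ leviQ u₂ z v)
    (hMA₁ : ∀ z ∈ D, ∃ v, v ≠ 0 ∧ leviQ u₁ z v = 0)
    (hbdry : ∀ x ∈ frontier D, u₁ x = u₂ x) :
    ∀ z ∈ D, u₂ z ≤ u₁ z := by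
  by_contra hcon
  push_neg at hcon
  obtain ⟨z₀, hz₀, hz₀lt⟩ := hcon
  -- basic facts about the squared norm
  have hsqC : ContDiff ℝ 2 (fun z : EuclideanSpace ℂ (Fin n) => ‖z‖ ^ 2) :=
    contDiff_norm_sq ℝ
  set T := Tmap n with hTdef
  have hfs : (fderiv ℝ (fun z : EuclideanSpace ℂ (Fin n) => ‖z‖ ^ 2)) = ⇑T := by
    funext z
    rw [(hasStrictFDerivAt_norm_sq z).hasFDerivAt.fderiv]
    ext w
    rw [hTdef, Tmap_apply, ContinuousLinearMap.smul_apply, innerSL_apply_apply, two_nsmul, two_mul]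
  have hT2 : ∀ x : EuclideanSpace ℂ (Fin n),
      fderiv ℝ (fderiv ℝ (fun z : EuclideanSpace ℂ (Fin n) => ‖z‖ ^ 2)) x = T := by
    intro x
    rw [hfs]
    exact T.fderiv
  have hTval : ∀ w : EuclideanSpace ℂ (Fin n), T w w = 2 * ‖w‖ ^ 2 := by
    intro w
    rw [hTdef, Tmap_apply, real_inner_self_eq_norm_sq]
  -- set up the perturbed function
  obtain ⟨C₀, hC₀⟩ := hbd.closure.exists_norm_le
  set C : ℝ := max C₀ 0 with hCdef
  have hC : ∀ y ∈ closure D, ‖y‖ ^ 2 ≤ C ^ 2 := by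
    intro y hy
    have h1 : ‖y‖ ≤ C := le_trans (hC₀ y hy) (le_max_left _ _)
    exact pow_le_pow_left₀ (norm_nonneg _) h1 2
  set m : ℝ := u₂ z₀ - u₁ z₀ with hmdef
  have hm : 0 < m := sub_pos.2 hz₀lt
  set ε : ℝ := m / (2 * (C ^ 2 + 1)) with hεdef
  have hε : 0 < ε := by positivity
  have hεC : ε * C ^ 2 < m := by
    have h1 : ε * (2 * (C ^ 2 + 1)) = m := by
      rw [hεdef]
      field_simp
    nlinarith [sq_nonneg C]
  set φ : EuclideanSpace ℂ (Fin n) → ℝ := fun z => u₂ z - u₁ z + ε * ‖z‖ ^ 2 with hφdef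
  -- maximum of φ on the closure
  have hK : IsCompact (closure D) :=
    Metric.isCompact_of_isClosed_isBounded isClosed_closure hbd.closure
  have hne : (closure D).Nonempty := ⟨z₀, subset_closure hz₀⟩
  have hφc : ContinuousOn φ (closure D) := by
    apply (hc₂.sub hc₁).add
    exact (continuous_const.mul (continuous_norm.pow 2)).continuousOn
  obtain ⟨x, hxK, hxmax⟩ := hK.exists_isMaxOn hne hφc
  have hz₀x : φ z₀ ≤ φ x := hxmax (subset_closure hz₀)
  have hkey : ε * C ^ 2 < φ x := by
    have h1 : m ≤ φ z₀ := by
      have : 0 ≤ ε * ‖z₀‖ ^ 2 := by positivity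
      simp only [hφdef, ← hmdef]
      linarith
    linarith
  have hxD : x ∈ D := by
    by_contra hxD
    have hxf : x ∈ frontier D := by
      rw [hD.frontier_eq]
      exact ⟨hxK, hxD⟩
    have h1 : u₂ x - u₁ x = 0 := by rw [hbdry x hxf]; ring
    have h2 : φ x ≤ ε * C ^ 2 := by
      simp only [hφdef, h1, zero_add]
      exact mul_le_mul_of_nonneg_left (hC x hxK) hε.le
    linarith
  have hlocmax : IsLocalMax φ x := by
    filter_upwards [hD.eventually_mem hxD] with y hy
    exact hxmax (subset_closure hy)
  have hφC2 : ContDiffOn ℝ 2 φ D :=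
    (hu₂.sub hu₁).add (contDiffOn_const.mul hsqC.contDiffOn)
  -- second derivative test
  have hA : ∀ w, fderiv ℝ (fderiv ℝ φ) x w w ≤ 0 := fun w =>
    secondDerivTest hD hxD hφC2 hlocmax w
  obtain ⟨v, hv0, hQ1⟩ := hMA₁ x hxD
  have hQφ : leviQ φ x v ≤ 0 := add_nonpos (hA v) (hA (Complex.I • v))
  -- compute the Levi form of φ
  have hde : fderiv ℝ φ =ᶠ[𝓝 x]
      fun y => fderiv ℝ u₂ y - fderiv ℝ u₁ y + ε • fderiv ℝ (fun z : EuclideanSpace ℂ (Fin n) => ‖z‖ ^ 2) y := by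
    filter_upwards [hD.eventually_mem hxD] with y hy
    have d1 : DifferentiableAt ℝ u₁ y :=
      (hu₁.contDiffAt (hD.mem_nhds hy)).differentiableAt two_ne_zero
    have d2 : DifferentiableAt ℝ u₂ y :=
      (hu₂.contDiffAt (hD.mem_nhds hy)).differentiableAt two_ne_zero
    have ds : DifferentiableAt ℝ (fun z : EuclideanSpace ℂ (Fin n) => ‖z‖ ^ 2) y :=
      (hsqC.differentiable two_ne_zero).differentiableAt
    show fderiv ℝ (fun z => u₂ z - u₁ z + ε * ‖z‖ ^ 2) y = _
    rw [fderiv_fun_add (f := fun z => u₂ z - u₁ z) (d2.sub d1) (ds.const_mul ε), fderiv_fun_sub d2 d1, fderiv_const_mul ds ε]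
  have hF1 : DifferentiableAt ℝ (fderiv ℝ u₁) x :=
    ((hu₁.contDiffAt (hD.mem_nhds hxD)).fderiv_right
      (by norm_num : (1:WithTop ℕ∞) + 1 ≤ 2)).differentiableAt one_ne_zero
  have hF2 : DifferentiableAt ℝ (fderiv ℝ u₂) x :=
    ((hu₂.contDiffAt (hD.mem_nhds hxD)).fderiv_right
      (by norm_num : (1:WithTop ℕ∞) + 1 ≤ 2)).differentiableAt one_ne_zero
  have hFs : DifferentiableAt ℝ (fderiv ℝ (fun z : EuclideanSpace ℂ (Fin n) => ‖z‖ ^ 2)) x := by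
    rw [hfs]
    exact T.differentiableAt
  have e3 : fderiv ℝ (fderiv ℝ φ) x
      = fderiv ℝ (fderiv ℝ u₂) x - fderiv ℝ (fderiv ℝ u₁) x + ε • T := by
    rw [hde.fderiv_eq, fderiv_fun_add (f := fun y => fderiv ℝ u₂ y - fderiv ℝ u₁ y)
      (g := fun y => ε • fderiv ℝ (fun z : EuclideanSpace ℂ (Fin n) => ‖z‖ ^ 2) y)
      (hF2.sub hF1) (hFs.const_smul ε), fderiv_fun_sub hF2 hF1,
      fderiv_fun_const_smul hFs ε, hT2]
  have hIv : ‖Complex.I • v‖ = ‖v‖ := by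
    rw [norm_smul, Complex.norm_I, one_mul]
  have hsplit : leviQ φ x v
      = leviQ u₂ x v - leviQ u₁ x v + ε * (2 * ‖v‖ ^ 2 + 2 * ‖Complex.I • v‖ ^ 2) := by
    simp only [leviQ, e3, ContinuousLinearMap.add_apply, ContinuousLinearMap.sub_apply,
      ContinuousLinearMap.smul_apply, smul_eq_mul, hTval]
    ring
  have hQ2 : 0 ≤ leviQ u₂ x v := hpsh₂ x hxD v
  have hv : 0 < ‖v‖ := norm_pos_iff.2 hv0
  rw [hsplit, hQ1, hIv] at hQφ
  nlinarith [mul_pos hε (by positivity : (0:ℝ) < 2 * ‖v‖ ^ 2 + 2 * ‖v‖ ^ 2)]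

theorem stmt_2 {n : ℕ} (hn : 1 ≤ n)
    (D : Set (EuclideanSpace ℂ (Fin n))) (hD : IsOpen D)
    (hbd : Bornology.IsBounded D)
    (u₁ u₂ : EuclideanSpace ℂ (Fin n) → ℝ)
    (hc₁ : ContinuousOn u₁ (closure D)) (hc₂ : ContinuousOn u₂ (closure D))
    (hu₁ : ContDiffOn ℝ 2 u₁ D) (hu₂ : ContDiffOn ℝ 2 u₂ D)
    (hpsh₁ : ∀ z ∈ D, ∀ v, 0 ≤ leviQ u₁ z v)
    (hpsh₂ : ∀ z ∈ D, ∀ v, 0 ≤ leviQ u₂ z v)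
    (hMA₁ : ∀ z ∈ D, ∃ v, v ≠ 0 ∧ leviQ u₁ z v = 0)
    (hMA₂ : ∀ z ∈ D, ∃ v, v ≠ 0 ∧ leviQ u₂ z v = 0)
    (hbdry : ∀ x ∈ frontier D, u₁ x = u₂ x) :
    ∀ z ∈ D, u₁ z = u₂ z := by
  intro z hz
  have h1 : u₂ z ≤ u₁ z :=
    cmp_aux D hD hbd u₁ u₂ hc₁ hc₂ hu₁ hu₂ hpsh₂ hMA₁ hbdry z hz
  have h2 : u₁ z ≤ u₂ z :=
    cmp_aux D hD hbd u₂ u₁ hc₂ hc₁ hu₂ hu₁ hpsh₁ hMA₂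
      (fun x hx => (hbdry x hx).symm) z hz
  linarith
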